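/- For any ε > 0 there exists δ > 0 (depending only on ε and q) such that for every two-user q-ary input multiple-access channel P: if I⁽¹⁾(P⁺) − I⁽¹⁾(P) < δ then I⁽¹⁾(P) ∉ (ε, 1−ε); similarly, if I⁽²⁾(P⁺) − I⁽²⁾(P) < δ then I⁽²⁾(P) ∉ (ε, 1−ε). -/

import Mathlib

/-!
Write `Z = (W, Y)` for what the first user's decoder sees, `p_z` for the law of `X` given `Z = z`,
and `H` for entropy in nats. With uniform inputs `I⁽¹⁾(P) = 1 - H(X | Z) / log q`. In `P⁺` the first
user's input `U₂` is decoded from two independent copies `Z₁, Z₂` of `Z` together with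
`U₁ = X₁ - X₂`, and the chain rule gives
`I⁽¹⁾(P⁺) - I⁽¹⁾(P) = (H(X₁ - X₂ | Z₁ Z₂) - H(X₁ | Z₁)) / log q`: the average over `(z₁, z₂)` of
the entropy gained by subtracting from `X₁ ∼ p_{z₁}` an independent `X₂ ∼ p_{z₂}`.
Since `q` is prime, a law on `ZMod q` invariant under a nonzero shift is uniform, so by strict
concavity of `-t log t` the gain is positive unless `p_{z₁}` is uniform or `p_{z₂}` is a point mass;
by compactness it is bounded below uniformly when `H(p_{z₁}) ≤ (1 - ε/2) log q` and
`H(p_{z₂}) ≥ (ε/2) log q`. If `I⁽¹⁾(P) ∈ (ε, 1 - ε)`, Markov's inequality gives each of these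
events probability at least `ε/2`. Finally, `I⁽²⁾` is `I⁽¹⁾` of the channel with the users swapped.
-/

open Finset

namespace PolarMAC

/-- A two-user `q`-ary input multiple-access channel: an arbitrary finite output
alphabet `Y` together with transition probabilities `P x w y = P(y | x, w)`. -/
structure MAC (q : ℕ) where
  Y : Type
  [fintypeY : Fintype Y]
  P : ZMod q → ZMod q → Y → ℝ

attribute [instance] MAC.fintypeY

/-- `M` is a genuine MAC: entries nonnegative and rows summing to one. -/
def IsMAC {q : ℕ} [Fact (Nat.Prime q)] (M : MAC q) : Prop :=
  (∀ x w y, 0 ≤ M.P x w y) ∧ ∀ x w, ∑ y, M.P x w y = 1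

/-- Entropy (base `q`) of a pmf on a finite type. -/
noncomputable def Hq (q : ℕ) {α : Type*} [Fintype α] (p : α → ℝ) : ℝ :=
  ∑ a, -(p a * Real.logb q (p a))

/-- Mutual information (base `q`) between the two coordinates of a joint pmf. -/
noncomputable def MIq (q : ℕ) {α β : Type*} [Fintype α] [Fintype β] (p : α → β → ℝ) : ℝ :=
  Hq q (fun a => ∑ b, p a b) + Hq q (fun b => ∑ a, p a b) - Hq q (fun ab : α × β => p ab.1 ab.2)

variable (q : ℕ) [Fact (Nat.Prime q)]

/-- `I⁽¹⁾(P) = I(X; Y W)` for independent uniform inputs. -/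
noncomputable def I1 (M : MAC q) : ℝ :=
  MIq q (fun (x : ZMod q) (wy : ZMod q × M.Y) => M.P x wy.1 wy.2 / (q : ℝ) ^ 2)

/-- `I⁽²⁾(P) = I(W; Y X)` for independent uniform inputs. -/
noncomputable def I2 (M : MAC q) : ℝ :=
  MIq q (fun (w : ZMod q) (xy : ZMod q × M.Y) => M.P xy.1 w xy.2 / (q : ℝ) ^ 2)

/-- `I⁽¹²⁾(P) = I(X W; Y)` for independent uniform inputs. -/
noncomputable def I12 (M : MAC q) : ℝ :=
  MIq q (fun (xw : ZMod q × ZMod q) (y : M.Y) => M.P xw.1 xw.2 y / (q : ℝ) ^ 2)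

/-- `K(P) = (I⁽¹⁾(P), I⁽²⁾(P), I⁽¹²⁾(P)) ∈ ℝ³`, with the Euclidean norm. -/
noncomputable def Kvec (M : MAC q) : EuclideanSpace ℝ (Fin 3) :=
  WithLp.toLp 2 ![I1 q M, I2 q M, I12 q M]

/-- The transform `P⁻(y₁,y₂ | u₁,v₁) = q⁻² ∑_{u₂,v₂} P(y₁|u₁+u₂, v₁+v₂) P(y₂|u₂,v₂)`. -/
noncomputable def minusT (M : MAC q) : MAC q where
  Y := M.Y × M.Y
  P := fun u₁ v₁ y =>
    ((q : ℝ) ^ 2)⁻¹ * ∑ u₂, ∑ v₂, M.P (u₁ + u₂) (v₁ + v₂) y.1 * M.P u₂ v₂ y.2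

/-- The transform `P⁺(y₁,y₂,u₁,v₁ | u₂,v₂) = q⁻² P(y₁|u₁+u₂, v₁+v₂) P(y₂|u₂,v₂)`,
with output `((y₁, y₂), (u₁, v₁))`. -/
noncomputable def plusT (M : MAC q) : MAC q where
  Y := (M.Y × M.Y) × ZMod q × ZMod q
  P := fun u₂ v₂ z =>
    ((q : ℝ) ^ 2)⁻¹ * (M.P (z.2.1 + u₂) (z.2.2 + v₂) z.1.1 * M.P u₂ v₂ z.1.2)



open Real

variable {q}

noncomputable def entropy {α : Type*} [Fintype α] (p : α → ℝ) : ℝ := ∑ a, negMulLog (p a)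

section Entropy

variable {α β : Type*} [Fintype α] [Fintype β]

theorem Hq_eq_entropy_div (n : ℕ) (p : α → ℝ) : Hq n p = entropy p / log n := by
  simp only [Hq, entropy, negMulLog, logb, sum_div]
  exact sum_congr rfl fun a _ => by ring

theorem entropy_equiv (e : α ≃ β) (p : α → ℝ) (p' : β → ℝ) (h : ∀ a, p a = p' (e a)) :
    entropy p = entropy p' :=
  Fintype.sum_equiv e _ _ fun a => by rw [h]

theorem continuous_entropy : Continuous (entropy : (α → ℝ) → ℝ) := by
  unfold entropy
  fun_prop

theorem entropy_chain_rule (m : β → ℝ) (post : β → α → ℝ) (hpost : ∀ b, ∑ a, post b a = 1) :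
    entropy (fun ab : α × β => m ab.2 * post ab.2 ab.1) =
      entropy m + ∑ b, m b * entropy (post b) := by
  simp only [entropy, Fintype.sum_prod_type, negMulLog_mul]
  rw [sum_comm, ← sum_add_distrib]
  refine sum_congr rfl fun b _ => ?_
  rw [sum_add_distrib, ← sum_mul, hpost, one_mul, mul_sum]

theorem entropy_mul {a : α → ℝ} {b : β → ℝ} (ha : ∑ x, a x = 1) (hb : ∑ y, b y = 1) :
    entropy (fun xy : α × β => a xy.1 * b xy.2) = entropy a + entropy b := by
  simp_rw [mul_comm (a _)]
  rw [entropy_chain_rule b (fun _ => a) (fun _ => ha), ← sum_mul, hb, one_mul, add_comm]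

theorem entropy_nonneg {p : α → ℝ} (hp : p ∈ stdSimplex ℝ α) : 0 ≤ entropy p :=
  sum_nonneg fun a _ =>
    negMulLog_nonneg (hp.1 a) (hp.2 ▸ single_le_sum (fun b _ => hp.1 b) (mem_univ a))

theorem entropy_le_log_card {p : α → ℝ} (hp : p ∈ stdSimplex ℝ α) :
    entropy p ≤ log (Fintype.card α) := by
  have hne : Nonempty α := by
    by_contra h
    simpa [not_nonempty_iff.1 h] using hp.2
  have hn : (0 : ℝ) < Fintype.card α := by exact_mod_cast Fintype.card_pos
  have jensen := concaveOn_negMulLog.le_map_sum (t := univ)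
    (w := fun _ => (Fintype.card α : ℝ)⁻¹) (fun _ _ => by positivity) (by simp [hn.ne'])
    (fun a _ => Set.mem_Ici.2 (hp.1 a))
  simp only [smul_eq_mul, ← mul_sum, hp.2, mul_one] at jensen
  refine le_of_mul_le_mul_left (jensen.trans_eq ?_) (inv_pos.2 hn)
  rw [negMulLog, log_inv]
  ring

theorem entropy_uniform [Nonempty α] :
    entropy (fun _ : α => (Fintype.card α : ℝ)⁻¹) = log (Fintype.card α) := by
  have hn : (Fintype.card α : ℝ) ≠ 0 := by exact_mod_cast Fintype.card_ne_zero
  simp only [entropy, sum_const, card_univ, nsmul_eq_mul, negMulLog, log_inv]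
  field_simp

theorem exists_ne_ne_zero_of_entropy_ne_zero [DecidableEq α] {p : α → ℝ} (hp : ∑ a, p a = 1)
    (h : entropy p ≠ 0) : ∃ a b, a ≠ b ∧ p a ≠ 0 ∧ p b ≠ 0 := by
  obtain ⟨a, -, ha⟩ := exists_ne_zero_of_sum_ne_zero h
  have ha0 : p a ≠ 0 := fun h0 => ha (by simp [h0])
  have hrest : ∑ b ∈ univ.erase a, p b ≠ 0 := by
    rw [sum_erase_eq_sub (mem_univ a), hp, sub_ne_zero]
    exact fun h1 => ha (by simp [← h1])
  obtain ⟨b, hb, hb0⟩ := exists_ne_zero_of_sum_ne_zero hrest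
  exact ⟨a, b, (ne_of_mem_erase hb).symm, ha0, hb0⟩

theorem MIq_equiv {γ : Type*} [Fintype γ] (n : ℕ) (e : β ≃ γ) (p : α → γ → ℝ) :
    MIq n (fun a b => p a (e b)) = MIq n p := by
  have hfst : (fun a => ∑ b, p a (e b)) = fun a => ∑ c, p a c :=
    funext fun a => Equiv.sum_comp e (p a)
  simp only [MIq, Hq_eq_entropy_div]
  rw [hfst, entropy_equiv e (fun b => ∑ a, p a (e b)) (fun c => ∑ a, p a c) fun _ => rfl,
    entropy_equiv ((Equiv.refl α).prodCongr e) (fun ab : α × β => p ab.1 (e ab.2))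
      (fun ac : α × γ => p ac.1 ac.2) fun _ => rfl]

end Entropy

section CondLaw

variable {α β : Type*} [Fintype α]

noncomputable def sndMarginal (J : α × β → ℝ) (b : β) : ℝ := ∑ a, J (a, b)

/-- The conditional law of the first coordinate given the second: a point mass where the second
coordinate has probability zero, so that it always lies in the simplex. -/
noncomputable def condLaw [DecidableEq α] [Inhabited α] (J : α × β → ℝ) (b : β) : α → ℝ :=
  if sndMarginal J b = 0 then Pi.single default 1 else fun a => J (a, b) / sndMarginal J b

variable {J : α × β → ℝ}

theorem sndMarginal_nonneg (hJ : ∀ ab, 0 ≤ J ab) (b : β) : 0 ≤ sndMarginal J b :=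
  sum_nonneg fun a _ => hJ (a, b)

theorem sum_sndMarginal [Fintype β] (J : α × β → ℝ) : ∑ b, sndMarginal J b = ∑ ab, J ab := by
  simp only [sndMarginal]
  rw [sum_comm, Fintype.sum_prod_type]

variable [DecidableEq α] [Inhabited α]

theorem condLaw_mem_stdSimplex (hJ : ∀ ab, 0 ≤ J ab) (b : β) : condLaw J b ∈ stdSimplex ℝ α := by
  unfold condLaw
  split_ifs with h
  · exact single_mem_stdSimplex ℝ default
  · exact ⟨fun a => div_nonneg (hJ _) (sndMarginal_nonneg hJ b), by
      simp only [← sum_div]; exact div_self h⟩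

theorem sndMarginal_mul_condLaw (hJ : ∀ ab, 0 ≤ J ab) (a : α) (b : β) :
    sndMarginal J b * condLaw J b a = J (a, b) := by
  unfold condLaw
  split_ifs with h
  · rw [h, zero_mul]
    exact ((sum_eq_zero_iff_of_nonneg fun a _ => hJ (a, b)).1 h a (mem_univ a)).symm
  · exact mul_div_cancel₀ _ h

theorem entropy_eq_entropy_sndMarginal_add [Fintype β] (hJ : ∀ ab, 0 ≤ J ab) :
    entropy J = entropy (sndMarginal J) + ∑ b, sndMarginal J b * entropy (condLaw J b) := by
  rw [← entropy_chain_rule _ _ fun b => (condLaw_mem_stdSimplex hJ b).2]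
  simp only [sndMarginal_mul_condLaw hJ]

end CondLaw

section DiffLaw

variable {G : Type*} [AddCommGroup G] [Fintype G]

/-- The law of `X₁ - X₂` for independent `X₁ ∼ p` and `X₂ ∼ r`. -/
noncomputable def diffLaw (p r : G → ℝ) (u : G) : ℝ := ∑ x, r x * p (u + x)

variable {p r : G → ℝ}

theorem sum_comp_add_right {M : Type*} [AddCommMonoid M] (f : G → M) (x : G) :
    ∑ u, f (u + x) = ∑ u, f u :=
  Equiv.sum_comp (Equiv.addRight x) f

theorem sum_diffLaw (hp : ∑ u, p u = 1) (hr : ∑ x, r x = 1) : ∑ u, diffLaw p r u = 1 := by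
  simp only [diffLaw]
  rw [sum_comm]
  simp only [← mul_sum, sum_comp_add_right p, hp, mul_one, hr]

theorem continuous_diffLaw : Continuous fun pr : (G → ℝ) × (G → ℝ) => diffLaw pr.1 pr.2 := by
  unfold diffLaw
  fun_prop

theorem entropy_eq_sum_sum_mul_negMulLog (hr : ∑ x, r x = 1) :
    entropy p = ∑ u, ∑ x, r x * negMulLog (p (u + x)) := by
  rw [sum_comm]
  simp only [← mul_sum, sum_comp_add_right (fun u => negMulLog (p u)), ← sum_mul, hr, one_mul]
  rfl

theorem sum_mul_negMulLog_le_negMulLog_diffLaw (hp : ∀ u, 0 ≤ p u) (hr : r ∈ stdSimplex ℝ G)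
    (u : G) : ∑ x, r x * negMulLog (p (u + x)) ≤ negMulLog (diffLaw p r u) :=
  concaveOn_negMulLog.le_map_sum (fun x _ => hr.1 x) hr.2 fun _ _ => Set.mem_Ici.2 (hp _)

theorem entropy_le_entropy_diffLaw (hp : ∀ u, 0 ≤ p u) (hr : r ∈ stdSimplex ℝ G) :
    entropy p ≤ entropy (diffLaw p r) := by
  rw [entropy_eq_sum_sum_mul_negMulLog hr.2]
  exact sum_le_sum fun u _ => sum_mul_negMulLog_le_negMulLog_diffLaw hp hr u

theorem entropy_lt_entropy_diffLaw_of_ne (hp : ∀ u, 0 ≤ p u) (hr : r ∈ stdSimplex ℝ G)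
    {u x₀ x₁ : G} (h₀ : r x₀ ≠ 0) (h₁ : r x₁ ≠ 0) (hne : p (u + x₀) ≠ p (u + x₁)) :
    entropy p < entropy (diffLaw p r) := by
  rw [entropy_eq_sum_sum_mul_negMulLog hr.2]
  refine sum_lt_sum (fun u _ => sum_mul_negMulLog_le_negMulLog_diffLaw hp hr u)
    ⟨u, mem_univ u, ?_⟩
  exact (strictConcaveOn_negMulLog.lt_map_sum_iff_of_nonneg (fun x _ => hr.1 x) hr.2
    fun _ _ => Set.mem_Ici.2 (hp _)).2 ⟨x₀, mem_univ _, x₁, mem_univ _, h₀, h₁, hne⟩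

theorem sndMarginal_mul_sndMarginal_mul_diffLaw {β : Type*} [DecidableEq G] [Inhabited G]
    {J : G × β → ℝ} (hJ : ∀ ab, 0 ≤ J ab) (b₁ b₂ : β) (u : G) :
    sndMarginal J b₁ * sndMarginal J b₂ * diffLaw (condLaw J b₁) (condLaw J b₂) u =
      ∑ x, J (u + x, b₁) * J (x, b₂) := by
  simp only [diffLaw, mul_sum]
  refine sum_congr rfl fun x _ => ?_
  rw [← sndMarginal_mul_condLaw hJ x b₂, ← sndMarginal_mul_condLaw hJ (u + x) b₁]
  ring

end DiffLaw

section Averages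

variable {ι : Type*} [Fintype ι]

theorem sum_mul_le_add_mul_sum_filter {w v : ι → ℝ} {c L : ℝ} (hw : w ∈ stdSimplex ℝ ι)
    (hv : ∀ i, v i ≤ L) (hc : 0 ≤ c) :
    ∑ i, w i * v i ≤ c + L * ∑ i ∈ univ.filter (fun i => c ≤ v i), w i := by
  rw [← sum_filter_add_sum_filter_not univ (fun i => c ≤ v i), add_comm]
  gcongr
  · calc ∑ i ∈ univ.filter (fun i => ¬c ≤ v i), w i * v i
        ≤ ∑ i ∈ univ.filter (fun i => ¬c ≤ v i), w i * c :=
          sum_le_sum fun i hi =>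
            mul_le_mul_of_nonneg_left (not_le.1 (mem_filter.1 hi).2).le (hw.1 i)
      _ ≤ ∑ i, w i * c :=
          sum_le_sum_of_subset_of_nonneg (filter_subset _ _) fun i _ _ => mul_nonneg (hw.1 i) hc
      _ = c := by rw [← sum_mul, hw.2, one_mul]
  · rw [mul_sum]
    exact sum_le_sum fun i _ => by
      rw [mul_comm L]
      exact mul_le_mul_of_nonneg_left (hv i) (hw.1 i)

theorem mul_sum_mul_sum_le_sum_sum {w : ι → ℝ} {g : ι → ι → ℝ} {A B : Finset ι} {c : ℝ}
    (hw : ∀ i, 0 ≤ w i) (hg : ∀ i j, 0 ≤ g i j) (hAB : ∀ i ∈ A, ∀ j ∈ B, c ≤ g i j) :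
    c * ((∑ i ∈ A, w i) * ∑ j ∈ B, w j) ≤ ∑ i, ∑ j, w i * w j * g i j := by
  have hterm : ∀ i j, 0 ≤ w i * w j * g i j :=
    fun i j => mul_nonneg (mul_nonneg (hw i) (hw j)) (hg i j)
  calc c * ((∑ i ∈ A, w i) * ∑ j ∈ B, w j) = ∑ i ∈ A, ∑ j ∈ B, w i * w j * c := by
        rw [sum_mul_sum, mul_sum]
        exact sum_congr rfl fun i _ => by
          rw [mul_sum]
          exact sum_congr rfl fun j _ => by ring
    _ ≤ ∑ i ∈ A, ∑ j ∈ B, w i * w j * g i j :=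
        sum_le_sum fun i hi => sum_le_sum fun j hj =>
          mul_le_mul_of_nonneg_left (hAB i hi j hj) (mul_nonneg (hw i) (hw j))
    _ ≤ ∑ i ∈ A, ∑ j, w i * w j * g i j :=
        sum_le_sum fun i _ => sum_le_sum_of_subset_of_nonneg (subset_univ B)
          fun j _ _ => hterm i j
    _ ≤ ∑ i, ∑ j, w i * w j * g i j :=
        sum_le_sum_of_subset_of_nonneg (subset_univ A)
          fun i _ _ => sum_nonneg fun j _ => hterm i j

end Averages

section ZModPrime

theorem log_pos_of_prime : 0 < log (q : ℝ) :=
  log_pos (by exact_mod_cast (Fact.out : q.Prime).one_lt)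

theorem entropy_le_log {p : ZMod q → ℝ} (hp : p ∈ stdSimplex ℝ (ZMod q)) : entropy p ≤ log q :=
  (entropy_le_log_card hp).trans_eq (by rw [ZMod.card])

theorem _root_.Function.Periodic.eq_apply_zero_of_ne_zero {β : Type*} {f : ZMod q → β}
    {d : ZMod q} (hf : Function.Periodic f d) (hd : d ≠ 0) (v : ZMod q) : f v = f 0 := by
  have hv : v = 0 + (v * d⁻¹).val • d := by
    rw [nsmul_eq_mul, ZMod.natCast_zmod_val, zero_add, inv_mul_cancel_right₀ hd]
  rw [hv, hf.nsmul]

theorem entropy_lt_entropy_diffLaw {p r : ZMod q → ℝ} (hp : p ∈ stdSimplex ℝ (ZMod q))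
    (hr : r ∈ stdSimplex ℝ (ZMod q)) (hp_lt : entropy p < log q) (hr_pos : 0 < entropy r) :
    entropy p < entropy (diffLaw p r) := by
  obtain ⟨x₀, x₁, hne, h₀, h₁⟩ := exists_ne_ne_zero_of_entropy_ne_zero hr.2 hr_pos.ne'
  obtain ⟨u, hu⟩ : ∃ u, p (u + x₀) ≠ p (u + x₁) := by
    by_contra! h
    have hper : Function.Periodic p (x₁ - x₀) := fun v => by
      convert (h (v - x₀)).symm using 2 <;> abel
    have hconst := hper.eq_apply_zero_of_ne_zero (sub_ne_zero.2 hne.symm)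
    have huniform : p = fun _ => (Fintype.card (ZMod q) : ℝ)⁻¹ := by
      have hsum := hp.2
      simp only [hconst, sum_const, card_univ, nsmul_eq_mul] at hsum
      funext v
      rw [hconst v, eq_inv_of_mul_eq_one_right hsum]
    rw [huniform, entropy_uniform, ZMod.card] at hp_lt
    exact lt_irrefl _ hp_lt
  exact entropy_lt_entropy_diffLaw_of_ne hp.1 hr h₀ h₁ hu

theorem exists_add_le_entropy_diffLaw {c₁ c₂ : ℝ} (hc₁ : c₁ < log q) (hc₂ : 0 < c₂) :
    ∃ c > 0, ∀ p ∈ stdSimplex ℝ (ZMod q), ∀ r ∈ stdSimplex ℝ (ZMod q),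
      entropy p ≤ c₁ → c₂ ≤ entropy r → entropy p + c ≤ entropy (diffLaw p r) := by
  set K := (stdSimplex ℝ (ZMod q) ×ˢ stdSimplex ℝ (ZMod q)) ∩
    {pr | entropy pr.1 ≤ c₁ ∧ c₂ ≤ entropy pr.2}
  have hK : IsCompact K :=
    ((isCompact_stdSimplex ℝ _).prod (isCompact_stdSimplex ℝ _)).inter_right <|
      (isClosed_le (continuous_entropy.comp continuous_fst) continuous_const).inter
        (isClosed_le continuous_const (continuous_entropy.comp continuous_snd))
  have hgap : Continuous fun pr : (ZMod q → ℝ) × (ZMod q → ℝ) =>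
      entropy (diffLaw pr.1 pr.2) - entropy pr.1 :=
    (continuous_entropy.comp continuous_diffLaw).sub (continuous_entropy.comp continuous_fst)
  obtain ⟨c, hc, hcK⟩ := hK.exists_forall_le' hgap.continuousOn fun pr hpr =>
    sub_pos.2 (entropy_lt_entropy_diffLaw hpr.1.1 hpr.1.2 (hpr.2.1.trans_lt hc₁)
      (hc₂.trans_le hpr.2.2))
  refine ⟨c, hc, fun p hp r hr hp₁ hr₂ => ?_⟩
  linarith [hcK (p, r) ⟨⟨hp, hr⟩, hp₁, hr₂⟩]

theorem exists_le_sum_sum_entropy_diffLaw_sub {ε : ℝ} (hε : 0 < ε) :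
    ∃ δ > 0, ∀ (ι : Type) [Fintype ι] (w : ι → ℝ) (p : ι → ZMod q → ℝ),
      w ∈ stdSimplex ℝ ι → (∀ i, p i ∈ stdSimplex ℝ (ZMod q)) →
      ε * log q < ∑ i, w i * entropy (p i) → ∑ i, w i * entropy (p i) < (1 - ε) * log q →
      δ ≤ ∑ i, ∑ j, w i * w j * (entropy (diffLaw (p i) (p j)) - entropy (p i)) := by
  have hL : 0 < log (q : ℝ) := log_pos_of_prime
  have hεL : 0 < ε * log q := mul_pos hε hL
  obtain ⟨c, hc, hgap⟩ := exists_add_le_entropy_diffLaw (q := q)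
    (c₁ := log q - ε * log q / 2) (c₂ := ε * log q / 2) (by linarith) (by positivity)
  refine ⟨c * (ε / 2) ^ 2, by positivity, fun ι _ w p hw hp hlo hhi => ?_⟩
  set A := univ.filter fun i => ε * log q / 2 ≤ log q - entropy (p i)
  set B := univ.filter fun i => ε * log q / 2 ≤ entropy (p i)
  have hA : ε / 2 ≤ ∑ i ∈ A, w i := by
    have markov := sum_mul_le_add_mul_sum_filter (v := fun i => log q - entropy (p i)) hw
      (fun i => sub_le_self _ (entropy_nonneg (hp i))) (by positivity : 0 ≤ ε * log q / 2)
    simp only [mul_sub, sum_sub_distrib, ← sum_mul, hw.2, one_mul] at markov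
    nlinarith
  have hB : ε / 2 ≤ ∑ i ∈ B, w i := by
    have markov := sum_mul_le_add_mul_sum_filter (v := fun i => entropy (p i)) hw
      (fun i => entropy_le_log (hp i)) (by positivity : 0 ≤ ε * log q / 2)
    nlinarith
  calc c * (ε / 2) ^ 2 ≤ c * ((∑ i ∈ A, w i) * ∑ j ∈ B, w j) := by
        rw [sq]; gcongr; linarith
    _ ≤ _ := mul_sum_mul_sum_le_sum_sum hw.1
        (fun i j => sub_nonneg.2 (entropy_le_entropy_diffLaw (hp i).1 (hp j)))
        fun i hi j hj => by
          have := hgap _ (hp i) _ (hp j) (by linarith [(mem_filter.1 hi).2]) (mem_filter.1 hj).2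
          linarith

end ZModPrime

section MAC

variable {M : MAC q}

theorem MIq_eq_one_sub {β : Type*} [Fintype β] (p : ZMod q → β → ℝ)
    (hrow : ∀ a, ∑ b, p a b = (q : ℝ)⁻¹) :
    MIq q p = 1 - (entropy (fun ab : ZMod q × β => p ab.1 ab.2) -
      entropy (fun b => ∑ a, p a b)) / log q := by
  have huniform : entropy (fun _ : ZMod q => (q : ℝ)⁻¹) = log q := by
    simpa only [ZMod.card] using entropy_uniform (α := ZMod q)
  have hL : log (q : ℝ) ≠ 0 := log_pos_of_prime.ne'
  simp only [MIq, Hq_eq_entropy_div, hrow, huniform]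
  field_simp
  ring

noncomputable def jointLaw (M : MAC q) (t : ZMod q × ZMod q × M.Y) : ℝ :=
  M.P t.1 t.2.1 t.2.2 / (q : ℝ) ^ 2

theorem jointLaw_nonneg (hM : IsMAC M) (t : ZMod q × ZMod q × M.Y) : 0 ≤ jointLaw M t :=
  div_nonneg (hM.1 _ _ _) (by positivity)

theorem sum_jointLaw_row (hM : IsMAC M) (x : ZMod q) : ∑ z, jointLaw M (x, z) = (q : ℝ)⁻¹ := by
  have hq : (q : ℝ) ≠ 0 := by exact_mod_cast NeZero.ne q
  simp only [jointLaw, Fintype.sum_prod_type, ← sum_div, hM.2, sum_const, card_univ, ZMod.card,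
    nsmul_eq_mul]
  field_simp

theorem sum_jointLaw (hM : IsMAC M) : ∑ t, jointLaw M t = 1 := by
  have hq : (q : ℝ) ≠ 0 := by exact_mod_cast NeZero.ne q
  simp only [Fintype.sum_prod_type (f := jointLaw M), sum_jointLaw_row hM, sum_const, card_univ,
    ZMod.card, nsmul_eq_mul, mul_inv_cancel₀ hq]

theorem sndMarginal_jointLaw_mem_stdSimplex (hM : IsMAC M) :
    sndMarginal (jointLaw M) ∈ stdSimplex ℝ (ZMod q × M.Y) :=
  ⟨sndMarginal_nonneg (jointLaw_nonneg hM), (sum_sndMarginal _).trans (sum_jointLaw hM)⟩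

theorem I1_eq_one_sub_entropy (hM : IsMAC M) :
    I1 q M = 1 - (entropy (jointLaw M) - entropy (sndMarginal (jointLaw M))) / log q :=
  MIq_eq_one_sub _ (sum_jointLaw_row hM)

theorem I1_eq_one_sub_sum (hM : IsMAC M) :
    I1 q M = 1 - (∑ z, sndMarginal (jointLaw M) z * entropy (condLaw (jointLaw M) z)) / log q := by
  rw [I1_eq_one_sub_entropy hM, entropy_eq_entropy_sndMarginal_add (jointLaw_nonneg hM),
    add_sub_cancel_left]

theorem IsMAC.plusT (hM : IsMAC M) : IsMAC (plusT q M) := by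
  have hq : (q : ℝ) ≠ 0 := by exact_mod_cast NeZero.ne q
  refine ⟨fun _ _ _ => mul_nonneg (by positivity) (mul_nonneg (hM.1 _ _ _) (hM.1 _ _ _)),
    fun u₂ v₂ => ?_⟩
  show ∑ z : (M.Y × M.Y) × ZMod q × ZMod q,
    ((q : ℝ) ^ 2)⁻¹ * (M.P (z.2.1 + u₂) (z.2.2 + v₂) z.1.1 * M.P u₂ v₂ z.1.2) = 1
  rw [← mul_sum, Fintype.sum_prod_type, sum_comm]
  simp only [Fintype.sum_prod_type, ← mul_sum, hM.2, mul_one, sum_const, card_univ,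
    Fintype.card_prod, ZMod.card, nsmul_eq_mul, Nat.cast_mul]
  field_simp

theorem jointLaw_plusT (u₂ v₂ u₁ v₁ : ZMod q) (y₁ y₂ : M.Y) :
    jointLaw (plusT q M) (u₂, v₂, (y₁, y₂), u₁, v₁) =
      jointLaw M (u₁ + u₂, v₁ + v₂, y₁) * jointLaw M (u₂, v₂, y₂) := by
  simp only [jointLaw, PolarMAC.plusT]
  ring

/-- Reads an input-output pair `(u₂, (v₂, (y₁, y₂), u₁, v₁))` of `P⁺` as the two input-output
pairs `((u₁ + u₂, (v₁ + v₂, y₁)), (u₂, (v₂, y₂)))` of the underlying uses of `P`. -/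
def plusJointEquiv (G Y : Type*) [AddCommGroup G] :
    G × G × (Y × Y) × G × G ≃ (G × G × Y) × (G × G × Y) where
  toFun := fun ⟨u₂, v₂, (y₁, y₂), u₁, v₁⟩ => ((u₁ + u₂, v₁ + v₂, y₁), (u₂, v₂, y₂))
  invFun := fun ⟨(x₁, w₁, y₁), (x₂, w₂, y₂)⟩ => (x₂, w₂, (y₁, y₂), x₁ - x₂, w₁ - w₂)
  left_inv := fun ⟨u₂, v₂, (y₁, y₂), u₁, v₁⟩ => by simp
  right_inv := fun ⟨(x₁, w₁, y₁), (x₂, w₂, y₂)⟩ => by simp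

/-- Reads an output `(v₂, (y₁, y₂), u₁, v₁)` of `P⁺` as `u₁` together with the outputs
`(v₁ + v₂, y₁)` and `(v₂, y₂)` of the underlying uses of `P`. -/
def plusOutputEquiv (G Y : Type*) [AddCommGroup G] :
    G × (Y × Y) × G × G ≃ G × (G × Y) × (G × Y) where
  toFun := fun ⟨v₂, (y₁, y₂), u₁, v₁⟩ => (u₁, (v₁ + v₂, y₁), (v₂, y₂))
  invFun := fun ⟨u₁, (w₁, y₁), (w₂, y₂)⟩ => (w₂, (y₁, y₂), u₁, w₁ - w₂)
  left_inv := fun ⟨v₂, (y₁, y₂), u₁, v₁⟩ => by simp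
  right_inv := fun ⟨u₁, (w₁, y₁), (w₂, y₂)⟩ => by simp

theorem entropy_jointLaw_plusT (hM : IsMAC M) :
    entropy (jointLaw (plusT q M)) = 2 * entropy (jointLaw M) := by
  calc entropy (jointLaw (plusT q M))
      = entropy fun s : (ZMod q × ZMod q × M.Y) × (ZMod q × ZMod q × M.Y) =>
          jointLaw M s.1 * jointLaw M s.2 :=
        entropy_equiv (plusJointEquiv (ZMod q) M.Y) _ _
          fun ⟨u₂, v₂, (y₁, y₂), u₁, v₁⟩ => jointLaw_plusT u₂ v₂ u₁ v₁ y₁ y₂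
    _ = 2 * entropy (jointLaw M) := by
        rw [entropy_mul (sum_jointLaw hM) (sum_jointLaw hM), two_mul]

theorem entropy_sndMarginal_jointLaw_plusT (hM : IsMAC M) :
    entropy (sndMarginal (jointLaw (plusT q M))) = 2 * entropy (sndMarginal (jointLaw M)) +
      ∑ z₁, ∑ z₂, sndMarginal (jointLaw M) z₁ * sndMarginal (jointLaw M) z₂ *
        entropy (diffLaw (condLaw (jointLaw M) z₁) (condLaw (jointLaw M) z₂)) := by
  set w := sndMarginal (jointLaw M)
  set c := condLaw (jointLaw M)
  have hw := sndMarginal_jointLaw_mem_stdSimplex hM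
  have hc := condLaw_mem_stdSimplex (jointLaw_nonneg hM)
  calc entropy (sndMarginal (jointLaw (plusT q M)))
      = entropy fun s : ZMod q × (ZMod q × M.Y) × (ZMod q × M.Y) =>
          w s.2.1 * w s.2.2 * diffLaw (c s.2.1) (c s.2.2) s.1 :=
        entropy_equiv (plusOutputEquiv (ZMod q) M.Y) _ _ fun ⟨v₂, (y₁, y₂), u₁, v₁⟩ => by
          dsimp only [plusOutputEquiv, Equiv.coe_fn_mk]
          rw [sndMarginal_mul_sndMarginal_mul_diffLaw (jointLaw_nonneg hM)]
          exact sum_congr rfl fun u₂ _ => jointLaw_plusT u₂ v₂ u₁ v₁ y₁ y₂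
    _ = entropy (fun zz : (ZMod q × M.Y) × (ZMod q × M.Y) => w zz.1 * w zz.2) +
          ∑ zz : (ZMod q × M.Y) × (ZMod q × M.Y),
            w zz.1 * w zz.2 * entropy (diffLaw (c zz.1) (c zz.2)) :=
        entropy_chain_rule
          (fun zz : (ZMod q × M.Y) × (ZMod q × M.Y) => w zz.1 * w zz.2)
          (fun zz => diffLaw (c zz.1) (c zz.2)) fun zz => sum_diffLaw (hc zz.1).2 (hc zz.2).2
    _ = _ := by rw [entropy_mul hw.2 hw.2, Fintype.sum_prod_type, two_mul]

theorem I1_plusT_sub_I1 (hM : IsMAC M) :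
    I1 q (plusT q M) - I1 q M =
      (∑ z₁, ∑ z₂, sndMarginal (jointLaw M) z₁ * sndMarginal (jointLaw M) z₂ *
        (entropy (diffLaw (condLaw (jointLaw M) z₁) (condLaw (jointLaw M) z₂)) -
          entropy (condLaw (jointLaw M) z₁))) / log q := by
  set w := sndMarginal (jointLaw M)
  set c := condLaw (jointLaw M)
  have hmean : ∑ z₁, ∑ z₂, w z₁ * w z₂ * entropy (c z₁) = ∑ z, w z * entropy (c z) :=
    sum_congr rfl fun z₁ _ => by
      rw [← sum_mul, ← mul_sum, (sndMarginal_jointLaw_mem_stdSimplex hM).2, mul_one]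
  rw [I1_eq_one_sub_entropy hM.plusT, I1_eq_one_sub_entropy hM, entropy_jointLaw_plusT hM,
    entropy_sndMarginal_jointLaw_plusT hM, entropy_eq_entropy_sndMarginal_add (jointLaw_nonneg hM)]
  simp only [mul_sub, sum_sub_distrib, hmean]
  ring

theorem exists_le_I1_plusT_sub_I1 {ε : ℝ} (hε : 0 < ε) :
    ∃ δ > 0, ∀ M : MAC q, IsMAC M → I1 q M ∈ Set.Ioo ε (1 - ε) →
      δ ≤ I1 q (plusT q M) - I1 q M := by
  obtain ⟨δ, hδ, hgap⟩ := exists_le_sum_sum_entropy_diffLaw_sub (q := q) hε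
  have hL : 0 < log (q : ℝ) := log_pos_of_prime
  refine ⟨δ / log q, div_pos hδ hL, fun M hM hI => ?_⟩
  rw [I1_eq_one_sub_sum hM, Set.mem_Ioo, lt_sub_comm, div_lt_iff₀ hL, sub_lt_sub_iff_left,
    lt_div_iff₀ hL] at hI
  rw [I1_plusT_sub_I1 hM]
  exact div_le_div_of_nonneg_right (hgap _ _ _ (sndMarginal_jointLaw_mem_stdSimplex hM)
    (condLaw_mem_stdSimplex (jointLaw_nonneg hM)) hI.2 (by linarith [hI.1])) hL.le

def MAC.swap (M : MAC q) : MAC q where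
  Y := M.Y
  P := fun x w y => M.P w x y

theorem IsMAC.swap (hM : IsMAC M) : IsMAC M.swap :=
  ⟨fun x w y => hM.1 w x y, fun x w => hM.2 w x⟩

theorem I2_eq_I1_swap (M : MAC q) : I2 q M = I1 q M.swap := rfl

theorem I2_plusT_eq_I1_plusT_swap (M : MAC q) : I2 q (plusT q M) = I1 q (plusT q M.swap) :=
  MIq_equiv q ((Equiv.refl (ZMod q)).prodCongr ((Equiv.refl (M.Y × M.Y)).prodCongr
    (Equiv.prodComm (ZMod q) (ZMod q))))
    fun x (wy : ZMod q × (plusT q M.swap).Y) => (plusT q M.swap).P x wy.1 wy.2 / (q : ℝ) ^ 2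

end MAC

theorem small_increment_I1_I2 (q : ℕ) [Fact (Nat.Prime q)] (ε : ℝ) (hε : 0 < ε) :
    ∃ δ > 0, ∀ M : MAC q, IsMAC M →
      (I1 q (plusT q M) - I1 q M < δ → I1 q M ∉ Set.Ioo ε (1 - ε)) ∧
      (I2 q (plusT q M) - I2 q M < δ → I2 q M ∉ Set.Ioo ε (1 - ε)) := by
  obtain ⟨δ, hδ, hgap⟩ := exists_le_I1_plusT_sub_I1 (q := q) hε
  refine ⟨δ, hδ, fun M hM => ⟨fun hlt hI => (hgap M hM hI).not_gt hlt, fun hlt hI => ?_⟩⟩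
  rw [I2_plusT_eq_I1_plusT_swap, I2_eq_I1_swap] at hlt
  exact (hgap M.swap hM.swap hI).not_gt hlt

end PolarMAC
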